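/- arXiv:2603.26645 — 7 statements merged into one kernel-verified Lean document; each statement's English description precedes it below -/
import Mathlib

section
/- If d is an N×N symmetric matrix with zero diagonal representing a metric of strict negative type (i.e., x^T d x < 0 for all nonzero x with 1^T x = 0), N ≥ 2, and the all-ones vector 1 is an eigenvector of d, then d^{-1} is also of strict negative type: for all nonzero x with 1^T x = 0, x^T d^{-1} x < 0. -/
/-! If `d` is symmetric and `d *ᵥ 1 = λ • 1`, then `1 ⬝ᵥ d *ᵥ v = λ * ∑ i, v i`. So for `λ ≠ 0`
the matrix `d` is invertible and both `d` and `d⁻¹` preserve the hyperplane `∑ i, x i = 0`;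
writing `x = d *ᵥ y` there gives `x ⬝ᵥ d⁻¹ *ᵥ x = y ⬝ᵥ d *ᵥ y < 0`. That `λ > 0` comes from the
zero diagonal: on the centred vector `N • eᵢ - 1` the form of `d` takes the value `-N * λ`. -/

namespace Matrix

variable {n : Type*} [Fintype n] {A : Matrix n n ℝ} {lam : ℝ}

def IsStrictNegType (A : Matrix n n ℝ) : Prop :=
  ∀ x : n → ℝ, x ≠ 0 → ∑ i, x i = 0 → x ⬝ᵥ A *ᵥ x < 0

theorem one_dotProduct_mulVec_of_mulVec_one (hA : A.IsSymm) (hlam : A *ᵥ 1 = lam • 1)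
    (v : n → ℝ) : 1 ⬝ᵥ A *ᵥ v = lam * ∑ i, v i := by
  rw [dotProduct_mulVec, ← mulVec_transpose, hA.eq, hlam, smul_dotProduct, one_dotProduct,
    smul_eq_mul]

theorem pos_of_mulVec_one_eq_smul [DecidableEq n] [Nontrivial n] (hA : A.IsSymm)
    (hdiag : ∀ i, A i i = 0) (hneg : IsStrictNegType A) (hlam : A *ᵥ 1 = lam • 1) :
    0 < lam := by
  obtain ⟨i⟩ := ‹Nontrivial n›.to_nonempty
  have hcard : (1 : ℝ) < Fintype.card n := by exact_mod_cast Fintype.one_lt_card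
  have hx : (Fintype.card n : ℝ) • Pi.single i 1 - 1 ≠ 0 := fun h => by
    have := congrFun h i
    simp only [Pi.sub_apply, Pi.smul_apply, Pi.single_eq_same, smul_eq_mul, mul_one, Pi.one_apply,
      Pi.zero_apply] at this
    linarith
  have hsum : ∑ j, ((Fintype.card n : ℝ) • Pi.single i 1 - 1 : n → ℝ) j = 0 := by
    simp [Finset.sum_sub_distrib, ← Finset.mul_sum]
  have hcol : 1 ⬝ᵥ A.col i = lam := by
    simpa [mulVec_single_one] using one_dotProduct_mulVec_of_mulVec_one hA hlam (Pi.single i 1)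
  have hform : 0 < (Fintype.card n : ℝ) * lam := by
    simpa [mulVec_sub, mulVec_smul, hlam, hdiag, hcol] using hneg _ hx hsum
  exact pos_of_mul_pos_right hform (by positivity)

theorem isUnit_det_of_mulVec_one [DecidableEq n] (hA : A.IsSymm) (hneg : IsStrictNegType A)
    (hlam : A *ᵥ 1 = lam • 1) (hlam0 : lam ≠ 0) : IsUnit A.det := by
  rw [isUnit_iff_ne_zero, Ne, ← exists_mulVec_eq_zero_iff]
  rintro ⟨v, hv0, hv⟩
  have hsum : ∑ i, v i = 0 := by
    simpa [hv, hlam0] using one_dotProduct_mulVec_of_mulVec_one hA hlam v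
  simpa [hv] using hneg v hv0 hsum

theorem IsStrictNegType.inv [DecidableEq n] (hA : A.IsSymm) (hneg : IsStrictNegType A)
    (hlam : A *ᵥ 1 = lam • 1) (hlam0 : lam ≠ 0) : IsStrictNegType A⁻¹ := by
  intro x hx hsum
  have hAy : A *ᵥ A⁻¹ *ᵥ x = x := by
    rw [mulVec_mulVec, mul_nonsing_inv A (isUnit_det_of_mulVec_one hA hneg hlam hlam0),
      one_mulVec]
  have hy0 : A⁻¹ *ᵥ x ≠ 0 := fun h => hx (by rw [← hAy, h, mulVec_zero])
  have hysum : ∑ i, (A⁻¹ *ᵥ x) i = 0 := by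
    have := one_dotProduct_mulVec_of_mulVec_one hA hlam (A⁻¹ *ᵥ x)
    rw [hAy, one_dotProduct, hsum] at this
    exact (mul_eq_zero.mp this.symm).resolve_left hlam0
  calc x ⬝ᵥ A⁻¹ *ᵥ x = A⁻¹ *ᵥ x ⬝ᵥ A *ᵥ A⁻¹ *ᵥ x := by rw [hAy, dotProduct_comm]
    _ < 0 := hneg _ hy0 hysum

end Matrix

open Matrix

theorem stmt0_general {N : ℕ} (hN : 2 ≤ N) (d : Matrix (Fin N) (Fin N) ℝ)
    (hsymm : d.IsSymm) (hdiag : ∀ i, d i i = 0)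
    (hSNT : ∀ x : Fin N → ℝ, x ≠ 0 → ∑ i, x i = 0 → x ⬝ᵥ d.mulVec x < 0)
    (hev : ∃ lam : ℝ, d.mulVec 1 = lam • (1 : Fin N → ℝ)) :
    ∀ x : Fin N → ℝ, x ≠ 0 → ∑ i, x i = 0 → x ⬝ᵥ d⁻¹.mulVec x < 0 := by
  obtain ⟨lam, hlam⟩ := hev
  have : Nontrivial (Fin N) := Fin.nontrivial_iff_two_le.mpr hN
  exact IsStrictNegType.inv hsymm hSNT hlam (pos_of_mulVec_one_eq_smul hsymm hdiag hSNT hlam).ne'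

/-- If `d` is an `N×N` symmetric matrix with zero diagonal representing a metric of strict
negative type, `N ≥ 2`, and the all-ones vector is an eigenvector of `d`, then `d⁻¹` is also
of strict negative type. -/
theorem stmt0 {N : ℕ} (hN : 2 ≤ N) (d : Matrix (Fin N) (Fin N) ℝ)
    (hsymm : d.IsSymm) (hdiag : ∀ i, d i i = 0)
    (hpos : ∀ i j, i ≠ j → 0 < d i j)
    (htri : ∀ i j k, d i k ≤ d i j + d j k)
    (hSNT : ∀ x : Fin N → ℝ, x ≠ 0 → ∑ i, x i = 0 → x ⬝ᵥ d.mulVec x < 0)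
    (hev : ∃ lam : ℝ, d.mulVec 1 = lam • (1 : Fin N → ℝ)) :
    ∀ x : Fin N → ℝ, x ≠ 0 → ∑ i, x i = 0 → x ⬝ᵥ d⁻¹.mulVec x < 0 :=
  stmt0_general hN d hsymm hdiag hSNT hev
end

section
/- Let d be a strict negative type metric on [N], p* the maximizer of p ↦ p^T d p over the probability simplex, and J = supp(p*). Then restricted to J, the distribution p*|_J (renormalized) is the maximizer of q ↦ q^T d|_J q over the simplex on J; equivalently, the peel of d restricted to its own peel is the entire peel: peel(d|_J) = J. -/
open Matrix BigOperators

/-- Peel of a peel: if `p` maximizes the quadratic form over the simplex and `J` is its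
support, then the restriction of `p` to `J` maximizes the restricted quadratic form over the
simplex on `J`, and every such maximizer has full support (i.e. `peel (d|_J) = J`). -/
theorem stmt3 {N : ℕ} (d : Matrix (Fin N) (Fin N) ℝ)
    (hsymm : d.IsSymm) (hdiag : ∀ i, d i i = 0)
    (hpos : ∀ i j, i ≠ j → 0 < d i j)
    (htri : ∀ i j k, d i k ≤ d i j + d j k)
    (hSNT : ∀ x : Fin N → ℝ, x ≠ 0 → ∑ i, x i = 0 → x ⬝ᵥ d.mulVec x < 0)
    (p : Fin N → ℝ) (hp : p ∈ stdSimplex ℝ (Fin N))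
    (hmax : ∀ q ∈ stdSimplex ℝ (Fin N), q ⬝ᵥ d.mulVec q ≤ p ⬝ᵥ d.mulVec p)
    (J : Finset (Fin N)) (hJ : ∀ i, i ∈ J ↔ p i ≠ 0)
    (dJ : Matrix {i // i ∈ J} {i // i ∈ J} ℝ)
    (hdJ : dJ = d.submatrix Subtype.val Subtype.val) :
    ((fun j : {i // i ∈ J} => p j.1) ∈ stdSimplex ℝ {i // i ∈ J} ∧
      ∀ q ∈ stdSimplex ℝ {i // i ∈ J},
        q ⬝ᵥ dJ.mulVec q ≤ (fun j : {i // i ∈ J} => p j.1) ⬝ᵥ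
          dJ.mulVec (fun j : {i // i ∈ J} => p j.1)) ∧
    (∀ q ∈ stdSimplex ℝ {i // i ∈ J},
      (∀ r ∈ stdSimplex ℝ {i // i ∈ J}, r ⬝ᵥ dJ.mulVec r ≤ q ⬝ᵥ dJ.mulVec q) →
      ∀ j, q j ≠ 0) := by
  subst hdJ
  classical
  set E : ({i // i ∈ J} → ℝ) → (Fin N → ℝ) :=
    fun q i => if h : i ∈ J then q ⟨i, h⟩ else 0 with hE
  -- dot products against extensions
  have hdot : ∀ (q : {i // i ∈ J} → ℝ) (v : Fin N → ℝ),
      E q ⬝ᵥ v = ∑ j, q j * v j.1 := by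
    intro q v
    rw [dotProduct, ← Finset.sum_subset (Finset.subset_univ J)]
    · rw [← Finset.sum_coe_sort J (fun i => E q i * v i)]
      exact Finset.sum_congr rfl fun j _ => by simp [hE]
    · intro i _ hiJ; simp [hE, hiJ]
  have hsum : ∀ q : {i // i ∈ J} → ℝ, ∑ i, E q i = ∑ j, q j := by
    intro q
    have := hdot q (fun _ => 1)
    simpa [dotProduct] using this
  have hform : ∀ q r : {i // i ∈ J} → ℝ,
      E q ⬝ᵥ d.mulVec (E r) =
        q ⬝ᵥ (d.submatrix Subtype.val Subtype.val).mulVec r := by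
    intro q r
    rw [hdot]
    apply Finset.sum_congr rfl
    intro j _
    congr 1
    show d j.1 ⬝ᵥ E r = _
    rw [dotProduct_comm, hdot]
    simp [mulVec, dotProduct, mul_comm]
  have hd : ∀ i j, d j i = d i j := fun i j => congrFun (congrFun hsymm i) j
  have hBsymm : ∀ x y : Fin N → ℝ, x ⬝ᵥ d.mulVec y = y ⬝ᵥ d.mulVec x := by
    intro x y
    simp only [dotProduct, mulVec, dotProduct, Finset.mul_sum]
    rw [Finset.sum_comm]
    exact Finset.sum_congr rfl fun i _ => Finset.sum_congr rfl fun j _ => by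
      rw [hd i j]; ring
  have hEp : E (fun j : {i // i ∈ J} => p j.1) = p := by
    funext i
    simp only [hE]
    split
    · rfl
    · next h => exact (not_not.mp (fun hne => h ((hJ i).mpr hne))).symm
  have hEmem : ∀ q ∈ stdSimplex ℝ {i // i ∈ J}, E q ∈ stdSimplex ℝ (Fin N) := by
    intro q hq
    constructor
    · intro i
      simp only [hE]
      split
      · exact hq.1 _
      · exact le_refl 0
    · rw [hsum]; exact hq.2
  set pJ : {i // i ∈ J} → ℝ := fun j => p j.1 with hpJ
  have hpJmem : pJ ∈ stdSimplex ℝ {i // i ∈ J} := by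
    constructor
    · intro j; exact hp.1 _
    · have := hsum pJ
      rw [hEp] at this
      rw [← this]; exact hp.2
  have hval : pJ ⬝ᵥ (d.submatrix Subtype.val Subtype.val).mulVec pJ =
      p ⬝ᵥ d.mulVec p := by rw [← hform, hEp]
  have hmaxJ : ∀ q ∈ stdSimplex ℝ {i // i ∈ J},
      q ⬝ᵥ (d.submatrix Subtype.val Subtype.val).mulVec q ≤
        pJ ⬝ᵥ (d.submatrix Subtype.val Subtype.val).mulVec pJ := by
    intro q hq
    rw [hval, ← hform]
    exact hmax _ (hEmem q hq)
  refine ⟨⟨hpJmem, hmaxJ⟩, ?_⟩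
  intro q hq hqmax j
  -- q is also a maximizer; show q = pJ by uniqueness
  have hqval : q ⬝ᵥ (d.submatrix Subtype.val Subtype.val).mulVec q =
      pJ ⬝ᵥ (d.submatrix Subtype.val Subtype.val).mulVec pJ :=
    le_antisymm (hmaxJ q hq) (hqmax pJ hpJmem)
  have hqp : q = pJ := by
    by_contra hne
    have hEne : E q - p ≠ 0 := by
      intro h0
      apply hne
      funext k
      have : E q k.1 = p k.1 := by
        have := congrFun (sub_eq_zero.mp h0) k.1
        exact this
      simpa [hE] using this
    have hsum0 : ∑ i, (E q - p) i = 0 := by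
      simp only [Pi.sub_apply, Finset.sum_sub_distrib, hsum, hq.2, hp.2, sub_self]
    have hneg := hSNT (E q - p) hEne hsum0
    set M := p ⬝ᵥ d.mulVec p with hM
    have hEqval : E q ⬝ᵥ d.mulVec (E q) = M := by
      rw [hform, hqval, hval]
    have hcross : M < E q ⬝ᵥ d.mulVec p := by
      have hexp : (E q - p) ⬝ᵥ d.mulVec (E q - p) =
          E q ⬝ᵥ d.mulVec (E q) - 2 * (E q ⬝ᵥ d.mulVec p) + p ⬝ᵥ d.mulVec p := by
        rw [mulVec_sub, dotProduct_sub, sub_dotProduct, sub_dotProduct,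
          hBsymm p (E q)]
        ring
      rw [hexp, hEqval] at hneg
      linarith
    -- midpoint
    set m : Fin N → ℝ := fun i => (E q i + p i) / 2 with hm
    have hmmem : m ∈ stdSimplex ℝ (Fin N) := by
      constructor
      · intro i
        have h1 := (hEmem q hq).1 i
        have h2 := hp.1 i
        simp only [hm]
        linarith
      · show ∑ i, (E q i + p i) / 2 = 1
        rw [← Finset.sum_div, Finset.sum_add_distrib, hsum, hq.2, hp.2]
        norm_num
    have hmval : m ⬝ᵥ d.mulVec m =
        (E q ⬝ᵥ d.mulVec (E q) + 2 * (E q ⬝ᵥ d.mulVec p) + p ⬝ᵥ d.mulVec p) / 4 := by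
      have : m = (1/2 : ℝ) • (E q + p) := by
        funext i; simp [hm]; ring
      rw [this, smul_dotProduct, mulVec_smul, dotProduct_smul, mulVec_add,
        dotProduct_add, add_dotProduct, add_dotProduct, hBsymm p (E q)]
      simp only [smul_eq_mul]
      ring
    have := hmax m hmmem
    rw [hmval, hEqval] at this
    linarith
  rw [hqp]
  exact (hJ j.1).mp j.2
end

section
/- Let X = {x_1,...,x_N} be a finite set of points in R^m with Euclidean distance matrix d, and let p* be the maximizer of p ↦ p^T d p over the probability simplex. Then every point in the support of p* is a vertex (extreme point) of the convex hull of X. -/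
open Matrix Finset Filter Topology

/-!
If `x j` with `p j > 0` were a convex combination of the other points, consider the convex
function `H y = ∑_{l ≠ j} p l ‖y - x l‖`. Jensen gives another point `x k` with
`H (x j) ≤ H (x k)`, hence `(d p) j = H (x j) < H (x k) + p j ‖x k - x j‖ = (d p) k`. This
contradicts the first-order optimality condition of the maximizer, which says that `(d p) j`
is the largest entry of `d p` whenever `j` lies in the support of `p`.
-/

theorem ConvexOn.finset_sum {𝕜 E β ι : Type*} [Semiring 𝕜] [PartialOrder 𝕜]
    [AddCommMonoid E] [AddCommMonoid β] [PartialOrder β] [IsOrderedAddMonoid β] [SMul 𝕜 E]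
    [Module 𝕜 β] {s : Set E} (hs : Convex 𝕜 s) {t : Finset ι} {f : ι → E → β}
    (hf : ∀ i ∈ t, ConvexOn 𝕜 s (f i)) : ConvexOn 𝕜 s fun y => ∑ i ∈ t, f i y := by
  simpa only [← Finset.sum_apply] using
    Finset.sum_induction f (ConvexOn 𝕜 s) (fun _ _ => ConvexOn.add) (convexOn_const (0 : β) hs) hf

theorem ConvexOn.exists_lt_add_mul_dist_of_mem_convexHull {E : Type*} [NormedAddCommGroup E]
    [Module ℝ E] {f : E → ℝ} {s : Set E} (hf : ConvexOn ℝ (convexHull ℝ s) f) {z : E}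
    (hz : z ∈ convexHull ℝ s) (hzs : z ∉ s) {c : ℝ} (hc : 0 < c) :
    ∃ y ∈ s, f z < f y + c * dist y z := by
  obtain ⟨y, hy, hfy⟩ := hf.exists_ge_of_mem_convexHull (subset_convexHull ℝ s) hz
  exact ⟨y, hy, hfy.trans_lt <| lt_add_of_pos_right _ <|
    mul_pos hc (dist_pos.2 (ne_of_mem_of_not_mem hy hzs))⟩

theorem nonpos_of_forall_add_mul_nonpos {b c ε : ℝ} (hε : 0 < ε)
    (h : ∀ t, 0 < t → t ≤ ε → c + t * b ≤ 0) : c ≤ 0 := by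
  have hlim : Tendsto (fun t => c + t * b) (𝓝[>] 0) (𝓝 c) := by
    refine ((continuous_const.add (continuous_id.mul continuous_const)).tendsto' 0 c ?_).mono_left
      nhdsWithin_le_nhds
    simp
  refine le_of_tendsto hlim ?_
  filter_upwards [Ioc_mem_nhdsGT hε] with t ht using h t ht.1 ht.2

section FirstOrderCondition

variable {ι : Type*} [Fintype ι]

theorem add_smul_single_sub_single_mem_stdSimplex [DecidableEq ι] {p : ι → ℝ}
    (hp : p ∈ stdSimplex ℝ ι) {t : ℝ} (ht : 0 ≤ t) (j k : ι) (htj : t ≤ p j) :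
    p + t • (Pi.single k 1 - Pi.single j 1) ∈ stdSimplex ℝ ι := by
  refine ⟨fun i => ?_, ?_⟩
  · have hk : (0 : ℝ) ≤ Pi.single (M := fun _ => ℝ) k 1 i := by
      rcases eq_or_ne i k with rfl | h <;> simp [*]
    rcases eq_or_ne i j with rfl | h
    · simp only [Pi.add_apply, Pi.smul_apply, Pi.sub_apply, Pi.single_eq_same, smul_eq_mul]
      nlinarith
    · simp only [Pi.add_apply, Pi.smul_apply, Pi.sub_apply, Pi.single_eq_of_ne h, smul_eq_mul,
        sub_zero]
      nlinarith [hp.1 i]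
  · simp [Finset.sum_add_distrib, ← Finset.mul_sum, hp.2]

theorem dotProduct_mulVec_add_smul {A : Matrix ι ι ℝ} (hA : A.IsSymm) (p a : ι → ℝ) (t : ℝ) :
    (p + t • a) ⬝ᵥ A *ᵥ (p + t • a) =
      p ⬝ᵥ A *ᵥ p + 2 * t * (a ⬝ᵥ A *ᵥ p) + t ^ 2 * (a ⬝ᵥ A *ᵥ a) := by
  have hsymm : p ⬝ᵥ A *ᵥ a = a ⬝ᵥ A *ᵥ p := by
    rw [dotProduct_mulVec, ← mulVec_transpose, hA.eq, dotProduct_comm]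
  simp only [mulVec_add, mulVec_smul, dotProduct_add, add_dotProduct, dotProduct_smul,
    smul_dotProduct, smul_eq_mul, hsymm]
  ring

theorem mulVec_apply_le_of_isMaxOn_stdSimplex [DecidableEq ι] {A : Matrix ι ι ℝ} (hA : A.IsSymm)
    {p : ι → ℝ} (hp : p ∈ stdSimplex ℝ ι) (hmax : IsMaxOn (fun q => q ⬝ᵥ A *ᵥ q) (stdSimplex ℝ ι) p)
    {j : ι} (hj : p j ≠ 0) (k : ι) : (A *ᵥ p) k ≤ (A *ᵥ p) j := by
  set a : ι → ℝ := Pi.single k 1 - Pi.single j 1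
  have hslope : a ⬝ᵥ A *ᵥ p = (A *ᵥ p) k - (A *ᵥ p) j := by
    simp [a, sub_dotProduct, single_dotProduct]
  have hdescent : ∀ t, 0 < t → t ≤ p j → 2 * (a ⬝ᵥ A *ᵥ p) + t * (a ⬝ᵥ A *ᵥ a) ≤ 0 := by
    intro t ht htj
    have := isMaxOn_iff.1 hmax _ (add_smul_single_sub_single_mem_stdSimplex hp ht.le j k htj)
    rw [dotProduct_mulVec_add_smul hA] at this
    nlinarith
  have := nonpos_of_forall_add_mul_nonpos ((hp.1 j).lt_of_ne' hj) hdescent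
  linarith

end FirstOrderCondition

/-- If `d` is the Euclidean distance matrix of distinct points `x 1, …, x N` in `ℝ^m` and
`p` maximizes `p ⬝ᵥ d p` over the probability simplex, then every point in the support of
`p` is a vertex (extreme point) of the convex hull of the points, i.e. it does not lie in
the convex hull of the other points. -/
theorem stmt5 {N m : ℕ} (x : Fin N → EuclideanSpace ℝ (Fin m))
    (hinj : Function.Injective x)
    (d : Matrix (Fin N) (Fin N) ℝ) (hd : ∀ j k, d j k = dist (x j) (x k))
    (p : Fin N → ℝ) (hp : p ∈ stdSimplex ℝ (Fin N))
    (hmax : ∀ q ∈ stdSimplex ℝ (Fin N), q ⬝ᵥ d.mulVec q ≤ p ⬝ᵥ d.mulVec p) :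
    ∀ j : Fin N, p j ≠ 0 → x j ∉ convexHull ℝ (x '' {k : Fin N | k ≠ j}) := by
  intro j hj hmem
  have hsymm : d.IsSymm := by ext; simp [hd, dist_comm]
  have hopt := mulVec_apply_le_of_isMaxOn_stdSimplex hsymm hp (isMaxOn_iff.2 hmax) hj
  set H : EuclideanSpace ℝ (Fin m) → ℝ := fun y => ∑ l ∈ univ.erase j, p l * dist y (x l)
  have hH : ConvexOn ℝ Set.univ H :=
    ConvexOn.finset_sum convex_univ fun l _ => (convexOn_univ_dist (x l)).smul (hp.1 l)
  have hsplit : ∀ k, (d *ᵥ p) k = H (x k) + p j * dist (x k) (x j) := fun k => by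
    simp only [mulVec, dotProduct, hd, H, mul_comm (dist _ _)]
    rw [← add_sum_erase _ _ (mem_univ j), add_comm]
  obtain ⟨_, ⟨k, -, rfl⟩, hlt⟩ :=
    (hH.subset (Set.subset_univ _) (convex_convexHull ℝ _)).exists_lt_add_mul_dist_of_mem_convexHull
      hmem (by simp [hinj.mem_set_image]) ((hp.1 j).lt_of_ne' hj)
  have := hopt k
  rw [hsplit, hsplit, dist_self, mul_zero, add_zero] at this
  linarith
end

section
/- Let d and d' be strict negative type metrics on [N], and for a strict negative type metric e define γ(e) = -max{x^T e x : ‖x‖₂ = 1, 1^T x = 0} > 0. Let p*(d), p*(d') be the maximizers of the quadratic form over the probability simplex. Then ‖p*(d') - p*(d)‖₂ ≤ (2 / max{γ(d), γ(d')}) · ‖d' - d‖_op, where ‖·‖_op is the operator norm. -/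
/-!
Let `u = p' - p`. The first-order optimality conditions of `p` for `d` and of `p'` for `d'` on
the simplex give `uᵀ d p ≤ 0 ≤ uᵀ d' p'`; subtracting them yields
`-uᵀ d u ≤ uᵀ (d' - d) p' ≤ ‖u‖ ‖d' - d‖_op`, because `‖p'‖₂ ≤ 1`. Since `u` sums to zero,
`-uᵀ d u ≥ γ(d) ‖u‖²`, hence `γ(d) ‖u‖ ≤ ‖d' - d‖_op`; exchanging `d` and `d'` gives the same
bound with `γ(d')`.
-/

open Matrix Filter Topology Set

section EuclideanNorm

variable {ι : Type*} [Fintype ι]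

noncomputable def euclideanNorm (u : ι → ℝ) : ℝ := √(∑ i, u i ^ 2)

lemma euclideanNorm_nonneg (u : ι → ℝ) : 0 ≤ euclideanNorm u := Real.sqrt_nonneg _

lemma sq_euclideanNorm (u : ι → ℝ) : euclideanNorm u ^ 2 = ∑ i, u i ^ 2 :=
  Real.sq_sqrt (by positivity)

lemma euclideanNorm_pos {u : ι → ℝ} (hu : u ≠ 0) : 0 < euclideanNorm u := by
  obtain ⟨i, hi⟩ := Function.ne_iff.1 hu
  exact Real.sqrt_pos.2 <|
    Finset.sum_pos' (fun j _ => sq_nonneg _) ⟨i, Finset.mem_univ i, sq_pos_of_ne_zero hi⟩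

lemma euclideanNorm_smul (c : ℝ) (u : ι → ℝ) :
    euclideanNorm (c • u) = |c| * euclideanNorm u := by
  simp only [euclideanNorm, Pi.smul_apply, smul_eq_mul, mul_pow, ← Finset.mul_sum]
  rw [Real.sqrt_mul (sq_nonneg c), Real.sqrt_sq_eq_abs]

lemma euclideanNorm_neg (u : ι → ℝ) : euclideanNorm (-u) = euclideanNorm u := by
  simp [euclideanNorm]

lemma euclideanNorm_sub_comm (u v : ι → ℝ) : euclideanNorm (u - v) = euclideanNorm (v - u) := by
  rw [← neg_sub, euclideanNorm_neg]

lemma dotProduct_le_euclideanNorm_mul (u v : ι → ℝ) :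
    u ⬝ᵥ v ≤ euclideanNorm u * euclideanNorm v :=
  Real.sum_mul_le_sqrt_mul_sqrt _ _ _

lemma sum_sq_inv_euclideanNorm_smul {u : ι → ℝ} (hu : u ≠ 0) :
    ∑ i, ((euclideanNorm u)⁻¹ • u) i ^ 2 = 1 := by
  have hpos := euclideanNorm_pos hu
  rw [← sq_euclideanNorm, euclideanNorm_smul, abs_inv, abs_of_pos hpos,
    inv_mul_cancel₀ hpos.ne', one_pow]

lemma euclideanNorm_le_one_of_mem_stdSimplex {p : ι → ℝ} (hp : p ∈ stdSimplex ℝ ι) :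
    euclideanNorm p ≤ 1 := by
  refine Real.sqrt_le_one.2 (hp.2 ▸ Finset.sum_le_sum fun i _ => ?_)
  have hle : p i ≤ 1 := hp.2 ▸ Finset.single_le_sum (fun j _ => hp.1 j) (Finset.mem_univ i)
  nlinarith [hp.1 i]

lemma isCompact_setOf_sum_sq_eq_one : IsCompact {x : ι → ℝ | ∑ i, x i ^ 2 = 1} := by
  refine Metric.isCompact_of_isClosed_isBounded (isClosed_eq (by fun_prop) continuous_const) ?_
  refine (Metric.isBounded_closedBall (x := 0) (r := 1)).subset fun x hx => ?_
  rw [Metric.mem_closedBall, dist_zero_right, pi_norm_le_iff_of_nonneg zero_le_one]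
  intro i
  rw [Real.norm_eq_abs, ← sq_le_one_iff_abs_le_one]
  exact hx ▸ Finset.single_le_sum (fun j _ => sq_nonneg (x j)) (Finset.mem_univ i)

end EuclideanNorm

section OperatorNorm

variable {m n : Type*} [Fintype m] [Fintype n]

noncomputable def l2OpNorm (E : Matrix m n ℝ) : ℝ :=
  sSup {v : ℝ | ∃ x : n → ℝ, ∑ i, x i ^ 2 = 1 ∧ v = euclideanNorm (E *ᵥ x)}

lemma l2OpNorm_nonneg (E : Matrix m n ℝ) : 0 ≤ l2OpNorm E :=
  Real.sSup_nonneg <| by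
    rintro v ⟨x, -, rfl⟩
    exact euclideanNorm_nonneg _

lemma l2OpNorm_neg (E : Matrix m n ℝ) : l2OpNorm (-E) = l2OpNorm E := by
  simp only [l2OpNorm, neg_mulVec, euclideanNorm_neg]

lemma euclideanNorm_mulVec_le (E : Matrix m n ℝ) (x : n → ℝ) :
    euclideanNorm (E *ᵥ x) ≤ l2OpNorm E * euclideanNorm x := by
  obtain rfl | hx := eq_or_ne x 0
  · simp [euclideanNorm]
  have hbdd : BddAbove {v : ℝ | ∃ x : n → ℝ, ∑ i, x i ^ 2 = 1 ∧ v = euclideanNorm (E *ᵥ x)} :=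
    (isCompact_setOf_sum_sq_eq_one.image (f := fun x => euclideanNorm (E *ᵥ x))
      (by unfold euclideanNorm; fun_prop)).bddAbove.mono
      (by rintro v ⟨x, hx, rfl⟩; exact ⟨x, hx, rfl⟩)
  set c := euclideanNorm x
  have hc : 0 < c := euclideanNorm_pos hx
  have hunit : euclideanNorm (E *ᵥ (c⁻¹ • x)) ≤ l2OpNorm E :=
    le_csSup hbdd ⟨_, sum_sq_inv_euclideanNorm_smul hx, rfl⟩
  rw [mulVec_smul, euclideanNorm_smul, abs_inv, abs_of_pos hc, inv_mul_le_iff₀ hc] at hunit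
  linarith

end OperatorNorm

section QuadraticForm

variable {ι : Type*} [Fintype ι] {e : Matrix ι ι ℝ}

lemma dotProduct_mulVec_comm_of_isSymm (he : e.IsSymm) (x y : ι → ℝ) :
    x ⬝ᵥ e *ᵥ y = y ⬝ᵥ e *ᵥ x := by
  rw [dotProduct_mulVec, dotProduct_comm, ← mulVec_transpose, he.eq]

lemma add_smul_dotProduct_mulVec_add_smul (he : e.IsSymm) (x w : ι → ℝ) (t : ℝ) :
    (x + t • w) ⬝ᵥ e *ᵥ (x + t • w) =
      x ⬝ᵥ e *ᵥ x + 2 * t * (w ⬝ᵥ e *ᵥ x) + t ^ 2 * (w ⬝ᵥ e *ᵥ w) := by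
  simp only [mulVec_add, mulVec_smul, dotProduct_add, add_dotProduct, dotProduct_smul,
    smul_dotProduct, smul_eq_mul, dotProduct_mulVec_comm_of_isSymm he x w]
  ring

theorem sub_dotProduct_mulVec_nonpos_of_isMaxOn (he : e.IsSymm) {s : Set (ι → ℝ)}
    (hs : Convex ℝ s) {p q : ι → ℝ} (hp : p ∈ s) (hq : q ∈ s)
    (hmax : IsMaxOn (fun x => x ⬝ᵥ e *ᵥ x) s p) :
    (q - p) ⬝ᵥ e *ᵥ p ≤ 0 := by
  set a := (q - p) ⬝ᵥ e *ᵥ p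
  set b := (q - p) ⬝ᵥ e *ᵥ (q - p)
  have hsegment : ∀ t ∈ Ioc (0 : ℝ) 1, 2 * a + t * b ≤ 0 := by
    rintro t ⟨ht₀, ht₁⟩
    have h : (p + t • (q - p)) ⬝ᵥ e *ᵥ (p + t • (q - p)) ≤ p ⬝ᵥ e *ᵥ p :=
      hmax (hs.add_smul_sub_mem hp hq ⟨ht₀.le, ht₁⟩)
    rw [add_smul_dotProduct_mulVec_add_smul he] at h
    have : t * (2 * a + t * b) ≤ 0 := by linarith
    exact nonpos_of_mul_nonpos_right this ht₀
  have hlim : Tendsto (fun t : ℝ => 2 * a + t * b) (𝓝[>] 0) (𝓝 (2 * a)) := by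
    simpa using ((by fun_prop : Continuous fun t : ℝ => 2 * a + t * b).tendsto 0).mono_left
      nhdsWithin_le_nhds
  have := le_of_tendsto hlim (eventually_of_mem (Ioc_mem_nhdsGT one_pos) hsegment)
  linarith

theorem neg_dotProduct_mulVec_sub_le_of_isMaxOn {d d' : Matrix ι ι ℝ} (hd : d.IsSymm)
    (hd' : d'.IsSymm) {s : Set (ι → ℝ)} (hs : Convex ℝ s) {p p' : ι → ℝ} (hp : p ∈ s)
    (hp' : p' ∈ s) (hmax : IsMaxOn (fun x => x ⬝ᵥ d *ᵥ x) s p)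
    (hmax' : IsMaxOn (fun x => x ⬝ᵥ d' *ᵥ x) s p') :
    -((p' - p) ⬝ᵥ d *ᵥ (p' - p)) ≤ (p' - p) ⬝ᵥ (d' - d) *ᵥ p' := by
  have h := sub_dotProduct_mulVec_nonpos_of_isMaxOn hd hs hp hp' hmax
  have h' := sub_dotProduct_mulVec_nonpos_of_isMaxOn hd' hs hp' hp hmax'
  have hsplit : (p - p') ⬝ᵥ d' *ᵥ p' = -((p' - p) ⬝ᵥ d *ᵥ p + (p' - p) ⬝ᵥ d *ᵥ (p' - p) +
      (p' - p) ⬝ᵥ (d' - d) *ᵥ p') := by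
    simp only [sub_mulVec, mulVec_sub, dotProduct_sub, sub_dotProduct]
    ring
  linarith

end QuadraticForm

section NegativeType

variable {ι : Type*} [Fintype ι] {e : Matrix ι ι ℝ}

def rayleighValues (e : Matrix ι ι ℝ) : Set ℝ :=
  {v : ℝ | ∃ x : ι → ℝ, ∑ i, x i ^ 2 = 1 ∧ ∑ i, x i = 0 ∧ v = x ⬝ᵥ e *ᵥ x}

noncomputable def negTypeGap (e : Matrix ι ι ℝ) : ℝ := -sSup (rayleighValues e)

variable (ι) in
def rayleighDomain : Set (ι → ℝ) := {x | ∑ i, x i ^ 2 = 1 ∧ ∑ i, x i = 0}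

lemma isCompact_rayleighDomain : IsCompact (rayleighDomain ι) :=
  isCompact_setOf_sum_sq_eq_one.inter_right (isClosed_eq (by fun_prop) continuous_const)

lemma inv_euclideanNorm_smul_mem_rayleighDomain {u : ι → ℝ} (hu : u ≠ 0)
    (hsum : ∑ i, u i = 0) :
    (euclideanNorm u)⁻¹ • u ∈ rayleighDomain ι :=
  ⟨sum_sq_inv_euclideanNorm_smul hu, by simp [← Finset.mul_sum, hsum]⟩

lemma bddAbove_rayleighValues (e : Matrix ι ι ℝ) : BddAbove (rayleighValues e) :=
  (isCompact_rayleighDomain.image (f := fun x => x ⬝ᵥ e *ᵥ x) (by fun_prop)).bddAbove.mono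
    (by rintro v ⟨x, h₁, h₂, rfl⟩; exact ⟨x, ⟨h₁, h₂⟩, rfl⟩)

lemma negTypeGap_mul_sq_le {u : ι → ℝ} (hsum : ∑ i, u i = 0) :
    negTypeGap e * euclideanNorm u ^ 2 ≤ -(u ⬝ᵥ e *ᵥ u) := by
  obtain rfl | hu := eq_or_ne u 0
  · simp [euclideanNorm]
  set c := euclideanNorm u
  have hc : 0 < c := euclideanNorm_pos hu
  obtain ⟨h₁, h₂⟩ := inv_euclideanNorm_smul_mem_rayleighDomain hu hsum
  have hunit : (c⁻¹ • u) ⬝ᵥ e *ᵥ (c⁻¹ • u) ≤ sSup (rayleighValues e) :=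
    le_csSup (bddAbove_rayleighValues e) ⟨_, h₁, h₂, rfl⟩
  have hscale : u ⬝ᵥ e *ᵥ u = c ^ 2 * ((c⁻¹ • u) ⬝ᵥ e *ᵥ (c⁻¹ • u)) := by
    simp only [mulVec_smul, dotProduct_smul, smul_dotProduct, smul_eq_mul]
    field_simp
  rw [hscale, negTypeGap]
  nlinarith [mul_le_mul_of_nonneg_left hunit (sq_nonneg c)]

lemma exists_ne_zero_sum_eq_zero [Nontrivial ι] : ∃ u : ι → ℝ, u ≠ 0 ∧ ∑ i, u i = 0 := by
  classical
  obtain ⟨i, j, hij⟩ := exists_pair_ne ι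
  refine ⟨Pi.single i 1 - Pi.single j 1, fun h => ?_, by simp [Finset.sum_sub_distrib]⟩
  simpa [hij] using congrFun h i

theorem negTypeGap_pos [Nontrivial ι]
    (he : ∀ x : ι → ℝ, x ≠ 0 → ∑ i, x i = 0 → x ⬝ᵥ e *ᵥ x < 0) : 0 < negTypeGap e := by
  obtain ⟨u, hu, hsum⟩ := exists_ne_zero_sum_eq_zero (ι := ι)
  obtain ⟨x, ⟨h₁, h₂⟩, hmax⟩ := isCompact_rayleighDomain.exists_isMaxOn
    ⟨_, inv_euclideanNorm_smul_mem_rayleighDomain hu hsum⟩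
    (by fun_prop : Continuous fun x : ι → ℝ => x ⬝ᵥ e *ᵥ x).continuousOn
  have hgreatest : IsGreatest (rayleighValues e) (x ⬝ᵥ e *ᵥ x) :=
    ⟨⟨x, h₁, h₂, rfl⟩, by rintro v ⟨y, hy₁, hy₂, rfl⟩; exact hmax ⟨hy₁, hy₂⟩⟩
  have hx : x ≠ 0 := by rintro rfl; simp at h₁
  rw [negTypeGap, hgreatest.csSup_eq, neg_pos]
  exact he x hx h₂

end NegativeType

theorem negTypeGap_mul_euclideanNorm_sub_le {ι : Type*} [Fintype ι] {d d' : Matrix ι ι ℝ}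
    (hd : d.IsSymm) (hd' : d'.IsSymm) {p p' : ι → ℝ} (hp : p ∈ stdSimplex ℝ ι)
    (hp' : p' ∈ stdSimplex ℝ ι) (hmax : IsMaxOn (fun q => q ⬝ᵥ d *ᵥ q) (stdSimplex ℝ ι) p)
    (hmax' : IsMaxOn (fun q => q ⬝ᵥ d' *ᵥ q) (stdSimplex ℝ ι) p') :
    negTypeGap d * euclideanNorm (p' - p) ≤ l2OpNorm (d' - d) := by
  set u := p' - p
  have hsum : ∑ i, u i = 0 := by simp [u, Finset.sum_sub_distrib, hp.2, hp'.2]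
  have hE := l2OpNorm_nonneg (d' - d)
  have hsq : negTypeGap d * euclideanNorm u ^ 2 ≤ l2OpNorm (d' - d) * euclideanNorm u :=
    calc negTypeGap d * euclideanNorm u ^ 2
        ≤ -(u ⬝ᵥ d *ᵥ u) := negTypeGap_mul_sq_le hsum
      _ ≤ u ⬝ᵥ (d' - d) *ᵥ p' :=
        neg_dotProduct_mulVec_sub_le_of_isMaxOn hd hd' (convex_stdSimplex ℝ ι) hp hp' hmax hmax'
      _ ≤ euclideanNorm u * euclideanNorm ((d' - d) *ᵥ p') := dotProduct_le_euclideanNorm_mul _ _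
      _ ≤ euclideanNorm u * (l2OpNorm (d' - d) * 1) := by
        gcongr
        · exact euclideanNorm_nonneg u
        · exact (euclideanNorm_mulVec_le _ _).trans
            (mul_le_mul_of_nonneg_left (euclideanNorm_le_one_of_mem_stdSimplex hp') hE)
      _ = l2OpNorm (d' - d) * euclideanNorm u := by ring
  rcases (euclideanNorm_nonneg u).eq_or_lt with h | h
  · rwa [← h, mul_zero]
  · rw [sq, ← mul_assoc] at hsq
    exact le_of_mul_le_mul_right hsq h

theorem stmt6_general {N : ℕ} (hN : 2 ≤ N) (d d' : Matrix (Fin N) (Fin N) ℝ)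
    (hsymm : d.IsSymm)
    (hSNT : ∀ x : Fin N → ℝ, x ≠ 0 → ∑ i, x i = 0 → x ⬝ᵥ d.mulVec x < 0)
    (hsymm' : d'.IsSymm)
    (γd γd' : ℝ)
    (hγd : γd = -sSup {v : ℝ | ∃ x : Fin N → ℝ,
      ∑ i, (x i) ^ 2 = 1 ∧ ∑ i, x i = 0 ∧ v = x ⬝ᵥ d.mulVec x})
    (hγd' : γd' = -sSup {v : ℝ | ∃ x : Fin N → ℝ,
      ∑ i, (x i) ^ 2 = 1 ∧ ∑ i, x i = 0 ∧ v = x ⬝ᵥ d'.mulVec x})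
    (Eop : ℝ)
    (hEop : Eop = sSup {v : ℝ | ∃ x : Fin N → ℝ, ∑ i, (x i) ^ 2 = 1 ∧
      v = Real.sqrt (∑ i, ((d' - d).mulVec x i) ^ 2)})
    (p p' : Fin N → ℝ) (hp : p ∈ stdSimplex ℝ (Fin N)) (hp' : p' ∈ stdSimplex ℝ (Fin N))
    (hmax : ∀ q ∈ stdSimplex ℝ (Fin N), q ⬝ᵥ d.mulVec q ≤ p ⬝ᵥ d.mulVec p)
    (hmax' : ∀ q ∈ stdSimplex ℝ (Fin N), q ⬝ᵥ d'.mulVec q ≤ p' ⬝ᵥ d'.mulVec p') :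
    Real.sqrt (∑ i, (p' i - p i) ^ 2) ≤ 2 / max γd γd' * Eop := by
  have : Nontrivial (Fin N) := Fin.nontrivial_iff_two_le.2 hN
  change γd = negTypeGap d at hγd
  change γd' = negTypeGap d' at hγd'
  change Eop = l2OpNorm (d' - d) at hEop
  change euclideanNorm (p' - p) ≤ _
  have hγ : 0 < γd := hγd ▸ negTypeGap_pos hSNT
  have hE : 0 ≤ Eop := hEop ▸ l2OpNorm_nonneg _
  have h : γd * euclideanNorm (p' - p) ≤ Eop := hγd ▸ hEop ▸
    negTypeGap_mul_euclideanNorm_sub_le hsymm hsymm' hp hp' hmax hmax'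
  have h' : γd' * euclideanNorm (p' - p) ≤ Eop := by
    rw [hγd', hEop, euclideanNorm_sub_comm, ← l2OpNorm_neg, neg_sub]
    exact negTypeGap_mul_euclideanNorm_sub_le hsymm' hsymm hp' hp hmax' hmax
  have hm : 0 < max γd γd' := lt_max_of_lt_left hγ
  calc euclideanNorm (p' - p) ≤ Eop / max γd γd' := by
        rw [le_div_iff₀ hm, mul_comm, max_mul_of_nonneg _ _ (euclideanNorm_nonneg _)]
        exact max_le h h'
    _ ≤ 2 / max γd γd' * Eop := by
        rw [div_mul_eq_mul_div]
        gcongr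
        linarith

/-- Continuity of peel distributions: for strict negative type metrics `d, d'` on `[N]`,
with `γ(e) = -max {xᵀex : ‖x‖₂ = 1, 1ᵀx = 0}` and maximizers `p, p'` of the quadratic form
over the simplex, `‖p' - p‖₂ ≤ (2 / max (γ d) (γ d')) ‖d' - d‖_op`. -/
theorem stmt6 {N : ℕ} (hN : 2 ≤ N) (d d' : Matrix (Fin N) (Fin N) ℝ)
    (hsymm : d.IsSymm) (hdiag : ∀ i, d i i = 0)
    (hpos : ∀ i j, i ≠ j → 0 < d i j)
    (htri : ∀ i j k, d i k ≤ d i j + d j k)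
    (hSNT : ∀ x : Fin N → ℝ, x ≠ 0 → ∑ i, x i = 0 → x ⬝ᵥ d.mulVec x < 0)
    (hsymm' : d'.IsSymm) (hdiag' : ∀ i, d' i i = 0)
    (hpos' : ∀ i j, i ≠ j → 0 < d' i j)
    (htri' : ∀ i j k, d' i k ≤ d' i j + d' j k)
    (hSNT' : ∀ x : Fin N → ℝ, x ≠ 0 → ∑ i, x i = 0 → x ⬝ᵥ d'.mulVec x < 0)
    (γd γd' : ℝ)
    (hγd : γd = -sSup {v : ℝ | ∃ x : Fin N → ℝ,
      ∑ i, (x i) ^ 2 = 1 ∧ ∑ i, x i = 0 ∧ v = x ⬝ᵥ d.mulVec x})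
    (hγd' : γd' = -sSup {v : ℝ | ∃ x : Fin N → ℝ,
      ∑ i, (x i) ^ 2 = 1 ∧ ∑ i, x i = 0 ∧ v = x ⬝ᵥ d'.mulVec x})
    (Eop : ℝ)
    (hEop : Eop = sSup {v : ℝ | ∃ x : Fin N → ℝ, ∑ i, (x i) ^ 2 = 1 ∧
      v = Real.sqrt (∑ i, ((d' - d).mulVec x i) ^ 2)})
    (p p' : Fin N → ℝ) (hp : p ∈ stdSimplex ℝ (Fin N)) (hp' : p' ∈ stdSimplex ℝ (Fin N))
    (hmax : ∀ q ∈ stdSimplex ℝ (Fin N), q ⬝ᵥ d.mulVec q ≤ p ⬝ᵥ d.mulVec p)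
    (hmax' : ∀ q ∈ stdSimplex ℝ (Fin N), q ⬝ᵥ d'.mulVec q ≤ p' ⬝ᵥ d'.mulVec p') :
    Real.sqrt (∑ i, (p' i - p i) ^ 2) ≤ 2 / max γd γd' * Eop :=
  stmt6_general hN d d' hsymm hSNT hsymm' γd γd' hγd hγd' Eop hEop p p' hp hp' hmax hmax'
end

section
/- Let d be a strict negative type metric on [N] with peel distribution p* maximizing p ↦ p^T d p over the probability simplex. If (d p*)_j > max_{k ∉ supp(p*)} (d p*)_k for all j ∈ supp(p*), then there is ε > 0 such that every strict negative type metric d' with ‖d' - d‖_op < ε satisfies supp(p*(d')) = supp(p*(d)). -/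
/-!
Strict negative type makes `q ↦ qᵀ d q` strongly concave on the simplex: there is `γ > 0` with
`xᵀ d x ≤ -γ ‖x‖²` on the hyperplane `∑ x = 0`. Comparing the two maximizers then gives
`γ ‖p' - p‖² ≤ 2 ‖d' - d‖`, so `p'` is entrywise close to `p`, which keeps the support of `p`
inside that of `p'`, and the gradient `d' p'` is entrywise close to `d p`. The first-order
condition makes `d' p'` maximal on the support of `p'`, while `d p` drops by a fixed gap off the
support of `p`; for `d'` close enough to `d` the gap survives, so no new index can enter.
-/

open Matrix WithLp Filter Topology Set

theorem exists_pos_forall_le_of_forall_pos {α : Type*} [Finite α] {P : α → Prop} {g : α → ℝ}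
    (h : ∀ a, P a → 0 < g a) : ∃ δ > 0, ∀ a, P a → δ ≤ g a := by
  have : ∀ᶠ δ in 𝓝[>] (0 : ℝ), ∀ a, P a → δ ≤ g a := by
    refine eventually_all.2 fun a => ?_
    by_cases ha : P a
    · filter_upwards [nhdsWithin_le_nhds (eventually_le_nhds (h a ha))] with δ hδ _ using hδ
    · exact Eventually.of_forall fun _ h => absurd h ha
  exact (this.and self_mem_nhdsWithin).exists.imp fun δ hδ => ⟨hδ.2, hδ.1⟩

theorem setOf_ne_zero_eq_of_abs_sub_lt {ι : Type*} {p p' g g' : ι → ℝ} {m δ : ℝ} (hp : ∃ j, p j ≠ 0)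
    (hm : ∀ i, p i ≠ 0 → m ≤ p i) (hclose : ∀ i, |p' i - p i| < m)
    (hgap : ∀ j k, p j ≠ 0 → p k = 0 → δ ≤ g j - g k) (hg : ∀ i, |g' i - g i| < δ / 2)
    (hg' : ∀ j k, p' k ≠ 0 → g' j ≤ g' k) :
    {i | p' i ≠ 0} = {i | p i ≠ 0} := by
  ext i
  refine ⟨fun hi hpi => ?_, fun hi hp'i => ?_⟩
  · obtain ⟨j, hj⟩ := hp
    have := abs_lt.1 (hg i)
    have := abs_lt.1 (hg j)
    linarith [hgap j i hj hpi, hg' j i hi]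
  · have := hclose i
    rw [hp'i, zero_sub, abs_neg] at this
    linarith [le_abs_self (p i), hm i hi]

section

variable {ι : Type*} [Fintype ι]

theorem norm_toLp_eq_sqrt_sum_sq (x : ι → ℝ) : ‖toLp 2 x‖ = √(∑ i, x i ^ 2) := by
  simp [EuclideanSpace.norm_eq]

theorem abs_le_norm_toLp (x : ι → ℝ) (i : ι) : |x i| ≤ ‖toLp 2 x‖ :=
  PiLp.norm_apply_le (toLp 2 x) i

theorem norm_toLp_le_one_of_mem_stdSimplex {q : ι → ℝ} (hq : q ∈ stdSimplex ℝ ι) :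
    ‖toLp 2 q‖ ≤ 1 := by
  rw [norm_toLp_eq_sqrt_sum_sq, Real.sqrt_le_one, ← hq.2]
  gcongr with i
  have := hq.1 i
  have : q i ≤ 1 := hq.2 ▸ Finset.single_le_sum (fun j _ => hq.1 j) (Finset.mem_univ i)
  nlinarith

namespace Matrix

theorem IsSymm.dotProduct_mulVec_comm {A : Matrix ι ι ℝ} (hA : A.IsSymm) (x y : ι → ℝ) :
    x ⬝ᵥ A *ᵥ y = y ⬝ᵥ A *ᵥ x := by
  rw [dotProduct_mulVec, ← mulVec_transpose, hA.eq, dotProduct_comm]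

theorem IsSymm.dotProduct_mulVec_add {A : Matrix ι ι ℝ} (hA : A.IsSymm) (x y : ι → ℝ) :
    (x + y) ⬝ᵥ A *ᵥ (x + y) = x ⬝ᵥ A *ᵥ x + 2 * (y ⬝ᵥ A *ᵥ x) + y ⬝ᵥ A *ᵥ y := by
  rw [mulVec_add, dotProduct_add, add_dotProduct, add_dotProduct, hA.dotProduct_mulVec_comm x y]
  ring

variable [DecidableEq ι]

theorem norm_toEuclideanCLM_eq_sSup (A : Matrix ι ι ℝ) :
    ‖toEuclideanCLM (𝕜 := ℝ) A‖ =
      sSup {v : ℝ | ∃ x : ι → ℝ, ∑ i, x i ^ 2 = 1 ∧ v = √(∑ i, (A *ᵥ x) i ^ 2)} := by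
  rw [← ContinuousLinearMap.sSup_sphere_eq_norm]
  congr 1
  ext v
  constructor
  · rintro ⟨y, hy, rfl⟩
    refine ⟨ofLp y, ?_, ?_⟩
    · rwa [mem_sphere_zero_iff_norm, ← toLp_ofLp 2 y, norm_toLp_eq_sqrt_sum_sq,
        Real.sqrt_eq_one] at hy
    · dsimp only
      rw [← toLp_ofLp 2 y, toEuclideanCLM_toLp, norm_toLp_eq_sqrt_sum_sq, ofLp_toLp]
  · rintro ⟨x, hx, rfl⟩
    refine ⟨toLp 2 x, ?_, ?_⟩
    · rw [mem_sphere_zero_iff_norm, norm_toLp_eq_sqrt_sum_sq, hx, Real.sqrt_one]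
    · dsimp only
      rw [toEuclideanCLM_toLp, norm_toLp_eq_sqrt_sum_sq]

theorem abs_mulVec_apply_le (A : Matrix ι ι ℝ) (x : ι → ℝ) (i : ι) :
    |(A *ᵥ x) i| ≤ ‖toEuclideanCLM (𝕜 := ℝ) A‖ * ‖toLp 2 x‖ := by
  calc |(A *ᵥ x) i| ≤ ‖toLp 2 (A *ᵥ x)‖ := abs_le_norm_toLp _ i
    _ ≤ _ := by rw [← toEuclideanCLM_toLp]; exact ContinuousLinearMap.le_opNorm _ _

theorem abs_dotProduct_mulVec_le (A : Matrix ι ι ℝ) (x : ι → ℝ) :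
    |x ⬝ᵥ A *ᵥ x| ≤ ‖toEuclideanCLM (𝕜 := ℝ) A‖ * ‖toLp 2 x‖ ^ 2 := by
  rw [← inner_toEuclideanCLM A (toLp 2 x) (toLp 2 x)]
  calc _ ≤ ‖toLp 2 x‖ * ‖toEuclideanCLM (𝕜 := ℝ) A (toLp 2 x)‖ := abs_real_inner_le_norm _ _
    _ ≤ ‖toLp 2 x‖ * (‖toEuclideanCLM (𝕜 := ℝ) A‖ * ‖toLp 2 x‖) := by
      gcongr
      exact ContinuousLinearMap.le_opNorm _ _
    _ = _ := by ring

theorem abs_mulVec_sub_mulVec_apply_le (A B : Matrix ι ι ℝ) {p p' : ι → ℝ}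
    (hp' : ‖toLp 2 p'‖ ≤ 1) (i : ι) :
    |(B *ᵥ p') i - (A *ᵥ p) i| ≤
      ‖toEuclideanCLM (𝕜 := ℝ) (B - A)‖ + ‖toEuclideanCLM (𝕜 := ℝ) A‖ * ‖toLp 2 (p' - p)‖ := by
  have hsplit : (B *ᵥ p') i - (A *ᵥ p) i = ((B - A) *ᵥ p') i + (A *ᵥ (p' - p)) i := by
    simp only [sub_mulVec, mulVec_sub, Pi.sub_apply]
    ring
  rw [hsplit]
  refine (abs_add_le _ _).trans (add_le_add ?_ (abs_mulVec_apply_le _ _ _))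
  exact (abs_mulVec_apply_le _ _ _).trans (mul_le_of_le_one_right (norm_nonneg _) hp')

end Matrix

theorem exists_pos_dotProduct_mulVec_le_neg_mul_norm_sq {A : Matrix ι ι ℝ}
    (hA : ∀ x : ι → ℝ, x ≠ 0 → ∑ i, x i = 0 → x ⬝ᵥ A *ᵥ x < 0) :
    ∃ γ > 0, ∀ x : ι → ℝ, ∑ i, x i = 0 → x ⬝ᵥ A *ᵥ x ≤ -γ * ‖toLp 2 x‖ ^ 2 := by
  set K : Set (EuclideanSpace ℝ ι) := Metric.sphere 0 1 ∩ {y | ∑ i, y i = 0}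
  set f : EuclideanSpace ℝ ι → ℝ := fun y => ofLp y ⬝ᵥ A *ᵥ ofLp y
  have hK : IsCompact K :=
    (isCompact_sphere 0 1).inter_right (isClosed_eq (by fun_prop) continuous_const)
  have hscale : ∀ x : ι → ℝ, x ≠ 0 → ∑ i, x i = 0 →
      ‖toLp 2 x‖⁻¹ • toLp 2 x ∈ K ∧
        x ⬝ᵥ A *ᵥ x = ‖toLp 2 x‖ ^ 2 * f (‖toLp 2 x‖⁻¹ • toLp 2 x) := by
    intro x hx0 hx
    have hnorm : ‖toLp 2 x‖ ≠ 0 := by simpa using hx0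
    refine ⟨⟨?_, ?_⟩, ?_⟩
    · rw [mem_sphere_zero_iff_norm, norm_smul, norm_inv, norm_norm, inv_mul_cancel₀ hnorm]
    · simp [← Finset.mul_sum, hx]
    · simp only [f, ofLp_smul, mulVec_smul, dotProduct_smul, smul_dotProduct, smul_eq_mul]
      field_simp
  rcases K.eq_empty_or_nonempty with hK0 | hKne
  · refine ⟨1, one_pos, fun x hx => ?_⟩
    obtain rfl | hx0 := eq_or_ne x 0
    · simp
    · exact absurd (hscale x hx0 hx).1 (hK0 ▸ notMem_empty _)
  · obtain ⟨z, hzK, hz⟩ := hK.exists_isMaxOn hKne (by fun_prop : Continuous f).continuousOn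
    have hz0 : ofLp z ≠ 0 := fun h => by
      simpa [show z = 0 from (ofLp_eq_zero 2).1 h] using hzK.1
    refine ⟨-f z, neg_pos.2 (hA _ hz0 hzK.2), fun x hx => ?_⟩
    obtain rfl | hx0 := eq_or_ne x 0
    · simp
    · obtain ⟨hmem, heq⟩ := hscale x hx0 hx
      rw [heq, neg_neg, mul_comm (f z)]
      exact mul_le_mul_of_nonneg_left (isMaxOn_iff.1 hz _ hmem) (sq_nonneg _)

section Maximizer

variable {A : Matrix ι ι ℝ} {p : ι → ℝ}

theorem sub_dotProduct_mulVec_nonpos_of_isMaxOn_s7 (hA : A.IsSymm)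
    (hmax : ∀ q ∈ stdSimplex ℝ ι, q ⬝ᵥ A *ᵥ q ≤ p ⬝ᵥ A *ᵥ p) (hp : p ∈ stdSimplex ℝ ι)
    {q : ι → ℝ} (hq : q ∈ stdSimplex ℝ ι) : (q - p) ⬝ᵥ A *ᵥ p ≤ 0 := by
  set v := q - p
  have hslope : ∀ t ∈ Ioc (0 : ℝ) 1, 2 * (v ⬝ᵥ A *ᵥ p) + t * (v ⬝ᵥ A *ᵥ v) ≤ 0 := by
    rintro t ⟨ht0, ht1⟩
    have hmem : p + t • v ∈ stdSimplex ℝ ι := by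
      convert convex_stdSimplex ℝ ι hp hq (sub_nonneg.2 ht1) ht0.le (by ring) using 1
      simp only [v, smul_sub, sub_smul, one_smul]
      abel
    have h := hmax _ hmem
    rw [hA.dotProduct_mulVec_add, mulVec_smul, dotProduct_smul, smul_dotProduct,
      smul_dotProduct, smul_eq_mul, smul_eq_mul, smul_eq_mul] at h
    nlinarith
  have hlim : Tendsto (fun t => 2 * (v ⬝ᵥ A *ᵥ p) + t * (v ⬝ᵥ A *ᵥ v)) (𝓝[>] 0)
      (𝓝 (2 * (v ⬝ᵥ A *ᵥ p))) :=
    tendsto_nhdsWithin_of_tendsto_nhds <|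
      (continuous_const.add (continuous_id.mul continuous_const)).tendsto' 0 _ (by simp)
  have := le_of_tendsto hlim (eventually_of_mem (Ioc_mem_nhdsGT one_pos) hslope)
  linarith

theorem mulVec_apply_le_of_isMaxOn (hA : A.IsSymm)
    (hmax : ∀ q ∈ stdSimplex ℝ ι, q ⬝ᵥ A *ᵥ q ≤ p ⬝ᵥ A *ᵥ p) (hp : p ∈ stdSimplex ℝ ι)
    {k : ι} (hk : p k ≠ 0) (j : ι) : (A *ᵥ p) j ≤ (A *ᵥ p) k := by
  classical
  have hpk : 0 < p k := (hp.1 k).lt_of_ne' hk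
  set q := p + p k • (Pi.single j 1 - Pi.single k 1)
  have hq : q ∈ stdSimplex ℝ ι := by
    refine ⟨fun i => ?_, ?_⟩
    · have := hp.1 i
      simp only [q, Pi.add_apply, Pi.smul_apply, Pi.sub_apply, Pi.single_apply, smul_eq_mul]
      split_ifs with hij hik <;> subst_vars <;> simp <;> linarith
    · simp [q, Finset.sum_add_distrib, ← Finset.mul_sum, hp.2]
  have h := sub_dotProduct_mulVec_nonpos_of_isMaxOn_s7 hA hmax hp hq
  simp only [q, add_sub_cancel_left, smul_dotProduct, sub_dotProduct, single_one_dotProduct,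
    smul_eq_mul] at h
  nlinarith

variable {γ : ℝ}

theorem dotProduct_mulVec_add_mul_norm_sq_le_of_isMaxOn (hA : A.IsSymm)
    (hneg : ∀ x : ι → ℝ, ∑ i, x i = 0 → x ⬝ᵥ A *ᵥ x ≤ -γ * ‖toLp 2 x‖ ^ 2)
    (hmax : ∀ q ∈ stdSimplex ℝ ι, q ⬝ᵥ A *ᵥ q ≤ p ⬝ᵥ A *ᵥ p) (hp : p ∈ stdSimplex ℝ ι)
    {q : ι → ℝ} (hq : q ∈ stdSimplex ℝ ι) :
    q ⬝ᵥ A *ᵥ q + γ * ‖toLp 2 (q - p)‖ ^ 2 ≤ p ⬝ᵥ A *ᵥ p := by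
  have hsum : ∑ i, (q - p) i = 0 := by simp [Finset.sum_sub_distrib, hp.2, hq.2]
  have h := hA.dotProduct_mulVec_add p (q - p)
  rw [add_sub_cancel] at h
  linarith [sub_dotProduct_mulVec_nonpos_of_isMaxOn_s7 hA hmax hp hq, hneg _ hsum]

theorem mul_norm_sub_sq_le_of_isMaxOn [DecidableEq ι] {B : Matrix ι ι ℝ} {p' : ι → ℝ}
    (hA : A.IsSymm) (hneg : ∀ x : ι → ℝ, ∑ i, x i = 0 → x ⬝ᵥ A *ᵥ x ≤ -γ * ‖toLp 2 x‖ ^ 2)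
    (hmax : ∀ q ∈ stdSimplex ℝ ι, q ⬝ᵥ A *ᵥ q ≤ p ⬝ᵥ A *ᵥ p) (hp : p ∈ stdSimplex ℝ ι)
    (hmax' : ∀ q ∈ stdSimplex ℝ ι, q ⬝ᵥ B *ᵥ q ≤ p' ⬝ᵥ B *ᵥ p') (hp' : p' ∈ stdSimplex ℝ ι) :
    γ * ‖toLp 2 (p' - p)‖ ^ 2 ≤ 2 * ‖toEuclideanCLM (𝕜 := ℝ) (B - A)‖ := by
  have hpert : ∀ q ∈ stdSimplex ℝ ι,
      |q ⬝ᵥ B *ᵥ q - q ⬝ᵥ A *ᵥ q| ≤ ‖toEuclideanCLM (𝕜 := ℝ) (B - A)‖ := fun q hq => by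
    rw [← dotProduct_sub, ← sub_mulVec]
    refine (abs_dotProduct_mulVec_le _ q).trans (mul_le_of_le_one_right (norm_nonneg _) ?_)
    exact pow_le_one₀ (norm_nonneg _) (norm_toLp_le_one_of_mem_stdSimplex hq)
  have hp_pert := abs_le.1 (hpert p hp)
  have hp'_pert := abs_le.1 (hpert p' hp')
  linarith [dotProduct_mulVec_add_mul_norm_sq_le_of_isMaxOn hA hneg hmax hp hp', hmax' p hp]

theorem setOf_ne_zero_eq_of_isMaxOn [DecidableEq ι] {B : Matrix ι ι ℝ} {p' : ι → ℝ} {m δ : ℝ}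
    (hA : A.IsSymm) (hγ : 0 < γ)
    (hneg : ∀ x : ι → ℝ, ∑ i, x i = 0 → x ⬝ᵥ A *ᵥ x ≤ -γ * ‖toLp 2 x‖ ^ 2)
    (hmax : ∀ q ∈ stdSimplex ℝ ι, q ⬝ᵥ A *ᵥ q ≤ p ⬝ᵥ A *ᵥ p) (hp : p ∈ stdSimplex ℝ ι)
    (hm : ∀ i, p i ≠ 0 → m ≤ p i)
    (hgap : ∀ j k, p j ≠ 0 → p k = 0 → δ ≤ (A *ᵥ p) j - (A *ᵥ p) k) (hB : B.IsSymm)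
    (hmax' : ∀ q ∈ stdSimplex ℝ ι, q ⬝ᵥ B *ᵥ q ≤ p' ⬝ᵥ B *ᵥ p') (hp' : p' ∈ stdSimplex ℝ ι)
    (hclose : √(2 * ‖toEuclideanCLM (𝕜 := ℝ) (B - A)‖ / γ) < m)
    (hgrad : ‖toEuclideanCLM (𝕜 := ℝ) (B - A)‖ +
      ‖toEuclideanCLM (𝕜 := ℝ) A‖ * √(2 * ‖toEuclideanCLM (𝕜 := ℝ) (B - A)‖ / γ) < δ / 2) :
    {i | p' i ≠ 0} = {i | p i ≠ 0} := by
  have hdist : ‖toLp 2 (p' - p)‖ ≤ √(2 * ‖toEuclideanCLM (𝕜 := ℝ) (B - A)‖ / γ) :=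
    Real.le_sqrt_of_sq_le <| (le_div_iff₀ hγ).2 <| by
      linarith [mul_norm_sub_sq_le_of_isMaxOn hA hneg hmax hp hmax' hp']
  have hsupp : ∃ j, p j ≠ 0 := by
    by_contra! h
    simpa [h] using hp.2
  refine setOf_ne_zero_eq_of_abs_sub_lt hsupp hm
    (fun i => (abs_le_norm_toLp (p' - p) i).trans_lt (hdist.trans_lt hclose)) hgap
    (fun i => ?_) (fun j k hk => mulVec_apply_le_of_isMaxOn hB hmax' hp' hk j)
  refine (abs_mulVec_sub_mulVec_apply_le A B (norm_toLp_le_one_of_mem_stdSimplex hp') i).trans_lt ?_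
  exact lt_of_le_of_lt (by gcongr) hgrad

end Maximizer

end

theorem stmt7_general {N : ℕ} (d : Matrix (Fin N) (Fin N) ℝ)
    (hsymm : d.IsSymm)
    (hSNT : ∀ x : Fin N → ℝ, x ≠ 0 → ∑ i, x i = 0 → x ⬝ᵥ d.mulVec x < 0)
    (p : Fin N → ℝ) (hp : p ∈ stdSimplex ℝ (Fin N))
    (hmax : ∀ q ∈ stdSimplex ℝ (Fin N), q ⬝ᵥ d.mulVec q ≤ p ⬝ᵥ d.mulVec p)
    (hstrict : ∀ j k : Fin N, p j ≠ 0 → p k = 0 → d.mulVec p k < d.mulVec p j) :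
    ∃ ε > 0, ∀ d' : Matrix (Fin N) (Fin N) ℝ,
      d'.IsSymm → (∀ i, d' i i = 0) → (∀ i j, i ≠ j → 0 < d' i j) →
      (∀ i j k, d' i k ≤ d' i j + d' j k) →
      (∀ x : Fin N → ℝ, x ≠ 0 → ∑ i, x i = 0 → x ⬝ᵥ d'.mulVec x < 0) →
      sSup {v : ℝ | ∃ x : Fin N → ℝ, ∑ i, (x i) ^ 2 = 1 ∧
        v = Real.sqrt (∑ i, ((d' - d).mulVec x i) ^ 2)} < ε →
      ∀ p' : Fin N → ℝ, p' ∈ stdSimplex ℝ (Fin N) →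
        (∀ q ∈ stdSimplex ℝ (Fin N), q ⬝ᵥ d'.mulVec q ≤ p' ⬝ᵥ d'.mulVec p') →
        {i : Fin N | p' i ≠ 0} = {i : Fin N | p i ≠ 0} := by
  obtain ⟨γ, hγ, hneg⟩ := exists_pos_dotProduct_mulVec_le_neg_mul_norm_sq hSNT
  obtain ⟨m, hm, hpm⟩ := exists_pos_forall_le_of_forall_pos (P := fun i => p i ≠ 0) (g := p)
    fun i hi => (hp.1 i).lt_of_ne' hi
  obtain ⟨δ, hδ, hgap⟩ := exists_pos_forall_le_of_forall_pos
    (P := fun jk : Fin N × Fin N => p jk.1 ≠ 0 ∧ p jk.2 = 0)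
    (g := fun jk => (d *ᵥ p) jk.1 - (d *ᵥ p) jk.2) fun jk hjk => sub_pos.2 (hstrict _ _ hjk.1 hjk.2)
  have hr : Continuous fun M : ℝ => √(2 * M / γ) := by fun_prop
  have hsmall : ∀ᶠ M in 𝓝 (0 : ℝ),
      √(2 * M / γ) < m ∧ M + ‖toEuclideanCLM (𝕜 := ℝ) d‖ * √(2 * M / γ) < δ / 2 :=
    (hr.continuousAt.eventually_lt continuousAt_const (by simpa using hm)).and
      ((continuous_id.add (continuous_const.mul hr)).continuousAt.eventually_lt continuousAt_const
        (by simpa using hδ))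
  obtain ⟨ε, hε, hεsmall⟩ := Metric.eventually_nhds_iff.1 hsmall
  refine ⟨ε, hε, fun d' hsymm' _ _ _ _ hM p' hp' hmax' => ?_⟩
  rw [← norm_toEuclideanCLM_eq_sSup] at hM
  obtain ⟨hclose, hgrad⟩ := hεsmall (y := ‖toEuclideanCLM (𝕜 := ℝ) (d' - d)‖)
    (by rwa [dist_zero_right, norm_norm])
  exact setOf_ne_zero_eq_of_isMaxOn hsymm hγ hneg hmax hp hpm
    (fun j k hj hk => hgap (j, k) ⟨hj, hk⟩) hsymm' hmax' hp' hclose hgrad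

/-- Generic stability of peel supports: if the first-order optimality inequality is strict
off the support of `p*(d)`, then all strict negative type metrics `d'` sufficiently close to
`d` in operator norm have the same peel support. -/
theorem stmt7 {N : ℕ} (d : Matrix (Fin N) (Fin N) ℝ)
    (hsymm : d.IsSymm) (hdiag : ∀ i, d i i = 0)
    (hpos : ∀ i j, i ≠ j → 0 < d i j)
    (htri : ∀ i j k, d i k ≤ d i j + d j k)
    (hSNT : ∀ x : Fin N → ℝ, x ≠ 0 → ∑ i, x i = 0 → x ⬝ᵥ d.mulVec x < 0)
    (p : Fin N → ℝ) (hp : p ∈ stdSimplex ℝ (Fin N))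
    (hmax : ∀ q ∈ stdSimplex ℝ (Fin N), q ⬝ᵥ d.mulVec q ≤ p ⬝ᵥ d.mulVec p)
    (hstrict : ∀ j k : Fin N, p j ≠ 0 → p k = 0 → d.mulVec p k < d.mulVec p j) :
    ∃ ε > 0, ∀ d' : Matrix (Fin N) (Fin N) ℝ,
      d'.IsSymm → (∀ i, d' i i = 0) → (∀ i j, i ≠ j → 0 < d' i j) →
      (∀ i j k, d' i k ≤ d' i j + d' j k) →
      (∀ x : Fin N → ℝ, x ≠ 0 → ∑ i, x i = 0 → x ⬝ᵥ d'.mulVec x < 0) →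
      sSup {v : ℝ | ∃ x : Fin N → ℝ, ∑ i, (x i) ^ 2 = 1 ∧
        v = Real.sqrt (∑ i, ((d' - d).mulVec x i) ^ 2)} < ε →
      ∀ p' : Fin N → ℝ, p' ∈ stdSimplex ℝ (Fin N) →
        (∀ q ∈ stdSimplex ℝ (Fin N), q ⬝ᵥ d'.mulVec q ≤ p' ⬝ᵥ d'.mulVec p') →
        {i : Fin N | p' i ≠ 0} = {i : Fin N | p i ≠ 0} :=
  stmt7_general d hsymm hSNT p hp hmax hstrict
end

section
/- If d is a symmetric N×N matrix of strict negative type (x^T d x < 0 for nonzero x with 1^T x = 0) and N ≥ 2, then d has exactly one positive eigenvalue and N−1 negative eigenvalues; in particular d is invertible. -/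
/-!
Two orthonormal eigenvectors with nonnegative eigenvalues span a plane on which the quadratic
form is nonnegative, and this plane meets the hyperplane `∑ i, x i = 0` in a nonzero vector.
So strict negative type allows at most one nonnegative eigenvalue. The zero diagonal makes the
eigenvalues sum to zero, so for `N ≥ 2` they cannot all be `≤ 0`: the remaining one is positive.
-/

theorem exists_smul_add_smul_dotProduct_eq_zero {n R : Type*} [Fintype n] [CommRing R]
    [Nontrivial R] (p q u : n → R) :
    ∃ α β : R, (α ≠ 0 ∨ β ≠ 0) ∧ (α • p + β • q) ⬝ᵥ u = 0 := by
  by_cases hp : p ⬝ᵥ u = 0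
  · exact ⟨1, 0, .inl one_ne_zero, by simp [hp]⟩
  · refine ⟨q ⬝ᵥ u, -(p ⬝ᵥ u), .inr (neg_ne_zero.mpr hp), ?_⟩
    simp only [add_dotProduct, smul_dotProduct, smul_eq_mul]
    ring

namespace Matrix.IsHermitian

variable {n : Type*} [Fintype n] [DecidableEq n] {A : Matrix n n ℝ} (hA : A.IsHermitian)

theorem dotProduct_eigenvectorBasis (i j : n) :
    ⇑(hA.eigenvectorBasis i) ⬝ᵥ ⇑(hA.eigenvectorBasis j) = if i = j then 1 else 0 := by
  rw [← orthonormal_iff_ite.mp hA.eigenvectorBasis.orthonormal i j,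
    EuclideanSpace.inner_eq_star_dotProduct, star_trivial, dotProduct_comm]

theorem smul_add_smul_eigenvectorBasis_dotProduct_left {a b : n} (hab : a ≠ b) (α β : ℝ) :
    (α • ⇑(hA.eigenvectorBasis a) + β • ⇑(hA.eigenvectorBasis b)) ⬝ᵥ
      ⇑(hA.eigenvectorBasis a) = α := by
  simp [add_dotProduct, hA.dotProduct_eigenvectorBasis, hab.symm]

theorem dotProduct_mulVec_smul_add_smul_eigenvectorBasis {a b : n} (hab : a ≠ b) (α β : ℝ) :
    let x := α • ⇑(hA.eigenvectorBasis a) + β • ⇑(hA.eigenvectorBasis b)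
    x ⬝ᵥ A *ᵥ x = α ^ 2 * hA.eigenvalues a + β ^ 2 * hA.eigenvalues b := by
  simp only [mulVec_add, mulVec_smul, mulVec_eigenvectorBasis, add_dotProduct, dotProduct_add,
    smul_dotProduct, dotProduct_smul, smul_eq_mul, hA.dotProduct_eigenvectorBasis, ↓reduceIte,
    if_neg hab, if_neg hab.symm]
  ring

theorem subsingleton_setOf_eigenvalues_nonneg (u : n → ℝ)
    (hneg : ∀ x : n → ℝ, x ≠ 0 → x ⬝ᵥ u = 0 → x ⬝ᵥ A *ᵥ x < 0) :
    {i | 0 ≤ hA.eigenvalues i}.Subsingleton := by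
  intro a ha b hb
  by_contra hab
  obtain ⟨α, β, hαβ, hxu⟩ :=
    exists_smul_add_smul_dotProduct_eq_zero (hA.eigenvectorBasis a) (hA.eigenvectorBasis b) u
  have hx : α • ⇑(hA.eigenvectorBasis a) + β • ⇑(hA.eigenvectorBasis b) ≠ 0 := by
    intro hx0
    have hα := hA.smul_add_smul_eigenvectorBasis_dotProduct_left hab α β
    have hβ := hA.smul_add_smul_eigenvectorBasis_dotProduct_left (Ne.symm hab) β α
    rw [add_comm, hx0, zero_dotProduct] at hβ
    rw [hx0, zero_dotProduct] at hα
    exact hαβ.elim (· hα.symm) (· hβ.symm)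
  have hform := hneg _ hx hxu
  rw [hA.dotProduct_mulVec_smul_add_smul_eigenvectorBasis hab] at hform
  exact hform.not_ge (add_nonneg (mul_nonneg (sq_nonneg α) ha) (mul_nonneg (sq_nonneg β) hb))

theorem exists_eigenvalues_pos_of_trace_eq_zero (htr : A.trace = 0) (hA0 : A ≠ 0) :
    ∃ i, 0 < hA.eigenvalues i := by
  by_contra! hnonpos
  have hsum : ∑ i, hA.eigenvalues i = 0 := by
    simpa [hA.trace_eq_sum_eigenvalues] using htr
  refine hA0 (hA.eigenvalues_eq_zero_iff.mp (funext fun i => ?_))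
  exact (Finset.sum_eq_zero_iff_of_nonpos fun i _ => hnonpos i).mp hsum i (Finset.mem_univ i)

theorem exists_eigenvalues_pos_forall_ne_neg [Nontrivial n] (htr : A.trace = 0) (u : n → ℝ)
    (hneg : ∀ x : n → ℝ, x ≠ 0 → x ⬝ᵥ u = 0 → x ⬝ᵥ A *ᵥ x < 0) :
    ∃ j, 0 < hA.eigenvalues j ∧ ∀ i ≠ j, hA.eigenvalues i < 0 := by
  have hsub := hA.subsingleton_setOf_eigenvalues_nonneg u hneg
  have hA0 : A ≠ 0 := by
    intro h
    have huniv : {i | 0 ≤ hA.eigenvalues i} = Set.univ := by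
      simp [hA.eigenvalues_eq_zero_iff.mpr h]
    rw [huniv, Set.subsingleton_univ_iff] at hsub
    exact not_subsingleton n hsub
  obtain ⟨j, hj⟩ := hA.exists_eigenvalues_pos_of_trace_eq_zero htr hA0
  exact ⟨j, hj, fun i hij => not_le.mp fun hi => hij (hsub hi hj.le)⟩

end Matrix.IsHermitian

theorem stmt14_general {N : ℕ} (hN : 2 ≤ N) (d : Matrix (Fin N) (Fin N) ℝ)
    (hd : d.IsHermitian) (hdiag : ∀ i, d i i = 0)
    (hSNT : ∀ x : Fin N → ℝ, x ≠ 0 → ∑ i, x i = 0 → x ⬝ᵥ d.mulVec x < 0) :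
    (Finset.univ.filter fun i => 0 < hd.eigenvalues i).card = 1 ∧
    (Finset.univ.filter fun i => hd.eigenvalues i < 0).card = N - 1 ∧
    IsUnit d := by
  have : Nontrivial (Fin N) := Fin.nontrivial_iff_two_le.mpr hN
  have htr : d.trace = 0 := Finset.sum_eq_zero fun i _ => hdiag i
  obtain ⟨j, hj, hneg⟩ :=
    hd.exists_eigenvalues_pos_forall_ne_neg htr 1 (by simpa [dotProduct_one] using hSNT)
  have hpos_iff : ∀ i, 0 < hd.eigenvalues i ↔ i = j :=
    fun i => ⟨fun hi => by_contra fun hij => (hneg i hij).not_gt hi, fun h => h ▸ hj⟩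
  have hneg_iff : ∀ i, hd.eigenvalues i < 0 ↔ i ≠ j :=
    fun i => ⟨fun hi hij => (hij ▸ hj).not_gt hi, hneg i⟩
  refine ⟨?_, ?_, ?_⟩
  · simp [hpos_iff, Finset.filter_eq']
  · simp [hneg_iff, Finset.filter_ne']
  · rw [Matrix.isUnit_iff_isUnit_det, hd.det_eq_prod_eigenvalues, isUnit_iff_ne_zero,
      Finset.prod_ne_zero_iff]
    intro i _
    obtain rfl | hij := eq_or_ne i j
    · exact_mod_cast hj.ne'
    · exact_mod_cast (hneg i hij).ne

/-- A symmetric strict negative type matrix with `N ≥ 2` has exactly one positive eigenvalue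
and `N − 1` negative eigenvalues; in particular it is invertible. -/
theorem stmt14 {N : ℕ} (hN : 2 ≤ N) (d : Matrix (Fin N) (Fin N) ℝ)
    (hd : d.IsHermitian) (hdiag : ∀ i, d i i = 0)
    (hpos : ∀ i j, i ≠ j → 0 < d i j)
    (hSNT : ∀ x : Fin N → ℝ, x ≠ 0 → ∑ i, x i = 0 → x ⬝ᵥ d.mulVec x < 0) :
    (Finset.univ.filter fun i => 0 < hd.eigenvalues i).card = 1 ∧
    (Finset.univ.filter fun i => hd.eigenvalues i < 0).card = N - 1 ∧
    IsUnit d :=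
  stmt14_general hN d hd hdiag hSNT
end

section
/- Let d be a symmetric matrix of strict negative type on [N], p the maximizer of the quadratic form over the probability simplex, and q any point of the simplex. Then q^T d q ≤ p^T d p − γ(d)·‖q − p‖₂², where γ(d) = −max{x^T d x : ‖x‖₂ = 1, 1^T x = 0} > 0. -/
open Matrix BigOperators

private lemma quad_expand {N : ℕ} (d : Matrix (Fin N) (Fin N) ℝ) (hsymm : d.IsSymm)
    (x y : Fin N → ℝ) :
    (x + y) ⬝ᵥ d.mulVec (x + y) =
      x ⬝ᵥ d.mulVec x + 2 * (y ⬝ᵥ d.mulVec x) + y ⬝ᵥ d.mulVec y := by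
  have h : x ⬝ᵥ d.mulVec y = y ⬝ᵥ d.mulVec x := by
    rw [Matrix.dotProduct_mulVec, ← Matrix.mulVec_transpose, hsymm.eq, dotProduct_comm]
  simp only [Matrix.mulVec_add, dotProduct_add, add_dotProduct, h]
  ring

private lemma quad_smul {N : ℕ} (d : Matrix (Fin N) (Fin N) ℝ) (c : ℝ) (x : Fin N → ℝ) :
    (c • x) ⬝ᵥ d.mulVec (c • x) = c ^ 2 * (x ⬝ᵥ d.mulVec x) := by
  simp [Matrix.mulVec_smul, smul_dotProduct, dotProduct_smul]
  ring

/-- Quadratic growth estimate at the maximizer: if `p` maximizes the quadratic form of a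
symmetric strict negative type matrix `d` over the simplex, then for any `q` in the simplex,
`qᵀdq ≤ pᵀdp − γ(d)‖q − p‖₂²`, where `γ(d) = −max{xᵀdx : ‖x‖₂ = 1, 1ᵀx = 0}`. -/
theorem stmt15 {N : ℕ} (hN : 2 ≤ N) (d : Matrix (Fin N) (Fin N) ℝ)
    (hsymm : d.IsSymm) (hdiag : ∀ i, d i i = 0)
    (hpos : ∀ i j, i ≠ j → 0 < d i j)
    (htri : ∀ i j k, d i k ≤ d i j + d j k)
    (hSNT : ∀ x : Fin N → ℝ, x ≠ 0 → ∑ i, x i = 0 → x ⬝ᵥ d.mulVec x < 0)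
    (γ : ℝ)
    (hγ : γ = -sSup {v : ℝ | ∃ x : Fin N → ℝ,
      ∑ i, (x i) ^ 2 = 1 ∧ ∑ i, x i = 0 ∧ v = x ⬝ᵥ d.mulVec x})
    (p : Fin N → ℝ) (hp : p ∈ stdSimplex ℝ (Fin N))
    (hmax : ∀ q ∈ stdSimplex ℝ (Fin N), q ⬝ᵥ d.mulVec q ≤ p ⬝ᵥ d.mulVec p) :
    0 < γ ∧
    ∀ q ∈ stdSimplex ℝ (Fin N),
      q ⬝ᵥ d.mulVec q ≤ p ⬝ᵥ d.mulVec p - γ * ∑ i, (q i - p i) ^ 2 := by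
  haveI : NeZero N := ⟨by omega⟩
  set f : (Fin N → ℝ) → ℝ := fun x => x ⬝ᵥ d.mulVec x with hf
  set S : Set ℝ := {v : ℝ | ∃ x : Fin N → ℝ,
      ∑ i, (x i) ^ 2 = 1 ∧ ∑ i, x i = 0 ∧ v = x ⬝ᵥ d.mulVec x} with hS
  set K : Set (Fin N → ℝ) := {x | ∑ i, (x i) ^ 2 = 1 ∧ ∑ i, x i = 0} with hK
  -- K is compact
  have hfc : Continuous f := by
    simp only [hf, dotProduct, Matrix.mulVec]
    continuity
  have hKclosed : IsClosed K := by
    have h1 : Continuous fun x : Fin N → ℝ => ∑ i, (x i) ^ 2 := by continuity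
    have h2 : Continuous fun x : Fin N → ℝ => ∑ i, x i := by continuity
    exact (isClosed_eq h1 continuous_const).inter (isClosed_eq h2 continuous_const)
  have hKbdd : Bornology.IsBounded K := by
    apply (Metric.isBounded_closedBall (x := (0 : Fin N → ℝ)) (r := 1)).subset
    intro x hx
    rw [Metric.mem_closedBall, dist_zero_right]
    refine pi_norm_le_iff_of_nonneg (by norm_num) |>.2 fun i => ?_
    have h1 : (x i) ^ 2 ≤ 1 := by
      rw [← hx.1]
      exact Finset.single_le_sum (fun j _ => sq_nonneg (x j)) (Finset.mem_univ i)
    rw [Real.norm_eq_abs]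
    have := abs_nonneg (x i)
    nlinarith [sq_abs (x i)]
  have hKc : IsCompact K := Metric.isCompact_of_isClosed_isBounded hKclosed hKbdd
  -- K is nonempty
  obtain ⟨i0, i1, h01⟩ : ∃ i0 i1 : Fin N, i0 ≠ i1 :=
    ⟨⟨0, by omega⟩, ⟨1, by omega⟩, by intro h; have := congrArg Fin.val h; simp at this⟩
  have hKne : K.Nonempty := by
    set a : ℝ := Real.sqrt (1 / 2) with ha
    have ha2 : a ^ 2 = 1 / 2 := Real.sq_sqrt (by norm_num)
    refine ⟨fun i => (if i = i0 then a else 0) + (if i = i1 then -a else 0), ?_, ?_⟩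
    · have key : ∀ i : Fin N, ((if i = i0 then a else 0) + (if i = i1 then -a else 0)) ^ 2 =
          (if i = i0 then a ^ 2 else 0) + (if i = i1 then a ^ 2 else 0) := by
        intro i
        rcases eq_or_ne i i0 with rfl | hi0 <;> rcases eq_or_ne i i1 with h1 | hi1 <;>
          simp_all <;> ring
      rw [Finset.sum_congr rfl (fun i _ => key i), Finset.sum_add_distrib]
      simp [Finset.sum_ite_eq', ha2]
      norm_num
    · rw [Finset.sum_add_distrib]
      simp [Finset.sum_ite_eq']
  -- maximizer on K
  obtain ⟨x₀, hx₀K, hx₀max⟩ := hKc.exists_isMaxOn hKne hfc.continuousOn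
  have hSK : S = f '' K := by
    ext v
    constructor
    · rintro ⟨x, h1, h2, rfl⟩; exact ⟨x, ⟨h1, h2⟩, rfl⟩
    · rintro ⟨x, ⟨h1, h2⟩, rfl⟩; exact ⟨x, h1, h2, rfl⟩
  have hSne : S.Nonempty := ⟨f x₀, x₀, hx₀K.1, hx₀K.2, rfl⟩
  have hSbdd : BddAbove S := by
    refine ⟨f x₀, ?_⟩
    rintro v ⟨x, h1, h2, rfl⟩
    exact hx₀max ⟨h1, h2⟩
  have hx₀ne : x₀ ≠ 0 := by
    intro h
    rw [h] at hx₀K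
    have h1 := hx₀K.1
    simp at h1
  have hfx₀ : f x₀ < 0 := hSNT x₀ hx₀ne hx₀K.2
  have hsup_lt : sSup S < 0 := lt_of_le_of_lt (csSup_le hSne (by
    rintro v ⟨x, h1, h2, rfl⟩; exact hx₀max ⟨h1, h2⟩)) hfx₀
  have hγpos : 0 < γ := by rw [hγ]; linarith
  refine ⟨hγpos, fun q hq => ?_⟩
  -- main estimate
  set r : Fin N → ℝ := q - p with hr
  have hqpr : q = p + r := by simp [hr]
  have hsum_r : ∑ i, r i = 0 := by
    have h1 : ∑ i, q i = 1 := hq.2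
    have h2 : ∑ i, p i = 1 := hp.2
    simp only [hr, Pi.sub_apply, Finset.sum_sub_distrib, h1, h2, sub_self]
  rcases eq_or_ne r 0 with hr0 | hr0
  · have : q = p := by rw [hqpr, hr0, add_zero]
    subst this
    have : ∑ i, (q i - q i) ^ 2 = 0 := by simp
    rw [this]
    simp
  -- b = rᵀ d r < 0
  have hb_neg : r ⬝ᵥ d.mulVec r < 0 := hSNT r hr0 hsum_r
  set a : ℝ := r ⬝ᵥ d.mulVec p with ha
  set b : ℝ := r ⬝ᵥ d.mulVec r with hb
  -- first order condition: a ≤ 0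
  have hstep : ∀ t : ℝ, 0 < t → t ≤ 1 → 2 * a + t * b ≤ 0 := by
    intro t ht0 ht1
    have hmem : p + t • r ∈ stdSimplex ℝ (Fin N) := by
      have : p + t • r = (1 - t) • p + t • q := by
        rw [hqpr]; module
      rw [this]
      exact (convex_stdSimplex ℝ (Fin N)) hp hq (by linarith) (le_of_lt ht0) (by ring)
    have hle := hmax _ hmem
    have hexp : (p + t • r) ⬝ᵥ d.mulVec (p + t • r) =
        p ⬝ᵥ d.mulVec p + 2 * (t * a) + t ^ 2 * b := by
      rw [quad_expand d hsymm]
      have h1 : (t • r) ⬝ᵥ d.mulVec p = t * a := by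
        simp [ha, smul_dotProduct]
      have h2 : (t • r) ⬝ᵥ d.mulVec (t • r) = t ^ 2 * b := quad_smul d t r
      rw [h1, h2]
    rw [hexp] at hle
    have h3 : 2 * (t * a) + t ^ 2 * b ≤ 0 := by linarith
    have h4 : t * (2 * a + t * b) ≤ 0 := by nlinarith
    nlinarith
  have ha_le : a ≤ 0 := by
    by_contra h
    push_neg at h
    have hbneg := hb_neg
    set t : ℝ := min 1 (a / (-b)) with ht
    have ht0 : 0 < t := lt_min one_pos (div_pos h (by linarith))
    have ht1 : t ≤ 1 := min_le_left _ _
    have htb : t * b ≥ -a := by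
      have h1 : t ≤ a / (-b) := min_le_right _ _
      have h2 : t * (-b) ≤ a := (le_div_iff₀ (by linarith : (0:ℝ) < -b)).1 h1
      nlinarith
    have := hstep t ht0 ht1
    linarith
  -- second order: b ≤ -γ * ∑ r²
  set s : ℝ := Real.sqrt (∑ i, (r i) ^ 2) with hs
  have hsum_pos : 0 < ∑ i, (r i) ^ 2 := by
    obtain ⟨i, hi⟩ := Function.ne_iff.1 hr0
    exact Finset.sum_pos' (fun j _ => sq_nonneg (r j))
      ⟨i, Finset.mem_univ i, by
        have hi' : r i ≠ 0 := by simpa using hi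
        positivity⟩
  have hs_pos : 0 < s := Real.sqrt_pos.2 hsum_pos
  have hs_sq : s ^ 2 = ∑ i, (r i) ^ 2 := Real.sq_sqrt (le_of_lt hsum_pos)
  set u : Fin N → ℝ := s⁻¹ • r with hu
  have hu_sq : ∑ i, (u i) ^ 2 = 1 := by
    simp only [hu, Pi.smul_apply, smul_eq_mul, mul_pow, ← Finset.mul_sum]
    rw [← hs_sq]
    field_simp
  have hu_sum : ∑ i, u i = 0 := by
    simp only [hu, Pi.smul_apply, smul_eq_mul, ← Finset.mul_sum, hsum_r, mul_zero]
  have hu_mem : f u ∈ S := ⟨u, hu_sq, hu_sum, rfl⟩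
  have hu_le : f u ≤ sSup S := le_csSup hSbdd hu_mem
  have hu_val : f u = s⁻¹ ^ 2 * b := quad_smul d s⁻¹ r
  have hb_le : b ≤ -γ * ∑ i, (r i) ^ 2 := by
    have h1 : f u ≤ -γ := by rw [hγ]; linarith
    rw [hu_val] at h1
    have h2 : s⁻¹ ^ 2 * b ≤ -γ := h1
    have h3 : s ^ 2 > 0 := by positivity
    have h4 : s⁻¹ ^ 2 = (s ^ 2)⁻¹ := by rw [inv_pow]
    rw [h4] at h2
    have h5 : b ≤ -γ * s ^ 2 := by
      rw [inv_mul_le_iff₀ h3] at h2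
      linarith [h2]
    rw [hs_sq] at h5
    exact h5
  -- combine
  have hexp : q ⬝ᵥ d.mulVec q = p ⬝ᵥ d.mulVec p + 2 * a + b := by
    rw [hqpr, quad_expand d hsymm]
  have : ∑ i, (q i - p i) ^ 2 = ∑ i, (r i) ^ 2 := by
    simp [hr]
  rw [hexp, this]
  linarith
end
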